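/- Let p, q > 1, μ > 0, α = (p+1)/(pq-1), β = (q+1)/(pq-1), Γ, γ > 0 with γ^p = αΓ, Γ^q = βγ, and b = (pq−1)(2pq+p+q)/(4pq(p+1)(q+1)(μ+1)). Then the functions Φ₀(z) = Γ(1 + b z²)^{−α} and Ψ₀(z) = γ(1 + b z²)^{−β} (z ∈ ℝ, z ≥ 0 suffices) satisfy the ODE system −(z/2)Φ₀'(z) − αΦ₀(z) + Ψ₀(z)^p = 0 and −(z/2)Ψ₀'(z) − βΨ₀(z) + Φ₀(z)^q = 0 for all z. -/

import Mathlib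

/-! Both equations are instances of one identity for the profile `z ↦ A (1 + b z²)^(-e)`:
its Euler derivative `-(z/2) F'` equals `e A b z² (1 + b z²)^(-e-1)`, so
`-(z/2) F' - e F = -e A (1 + b z²)^(-e-1)`, and this is cancelled by `(B (1 + b z²)^(-f))^c`
as soon as `B^c = e A` and `f c = e + 1`. For the system these are the hypotheses on `Γ, γ`
together with the exponent relations `β p = α + 1`, `α q = β + 1`. -/

open Real

lemma hasDerivAt_mul_one_add_mul_sq_rpow_neg (A b e z : ℝ) (hz : 0 < 1 + b * z ^ 2) :
    HasDerivAt (fun z => A * (1 + b * z ^ 2) ^ (-e))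
      (-(2 * e * b * z * A) * (1 + b * z ^ 2) ^ (-e - 1)) z := by
  have hinner : HasDerivAt (fun z : ℝ => 1 + b * z ^ 2) (2 * b * z) z := by
    simpa [mul_comm, mul_left_comm] using ((hasDerivAt_pow 2 z).const_mul b).const_add 1
  exact ((hinner.rpow_const (Or.inl hz.ne')).const_mul A).congr_deriv (by ring)

theorem profile_equation {A B b c e f : ℝ} (hb : 0 ≤ b) (hB : 0 ≤ B)
    (hBc : B ^ c = e * A) (hfc : f * c = e + 1) (z : ℝ) :
    -(z / 2) * deriv (fun z => A * (1 + b * z ^ 2) ^ (-e)) z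
      - e * (A * (1 + b * z ^ 2) ^ (-e)) + (B * (1 + b * z ^ 2) ^ (-f)) ^ c = 0 := by
  have hu : 0 < 1 + b * z ^ 2 := by positivity
  rw [(hasDerivAt_mul_one_add_mul_sq_rpow_neg A b e z hu).deriv]
  set u := 1 + b * z ^ 2 with hu_def
  have hpow : (B * u ^ (-f)) ^ c = e * A * u ^ (-e - 1) := by
    rw [mul_rpow hB (rpow_nonneg hu.le _), ← rpow_mul hu.le, hBc,
      show -f * c = -e - 1 by linarith]
  have hsplit : u ^ (-e) = u ^ (-e - 1) * u := by
    rw [← rpow_add_one hu.ne', sub_add_cancel]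
  rw [hpow, hsplit, hu_def]
  ring

lemma div_mul_add_one_eq {p q : ℝ} (hpq : p * q - 1 ≠ 0) :
    (q + 1) / (p * q - 1) * p = (p + 1) / (p * q - 1) + 1 := by
  rw [div_mul_eq_mul_div, div_add_one hpq]
  ring

theorem stmt_4 (p q μ α β Γ γ b : ℝ) (hp : 1 < p) (hq : 1 < q) (hμ : 0 < μ)
    (hα : α = (p + 1) / (p * q - 1)) (hβ : β = (q + 1) / (p * q - 1))
    (hΓ : 0 < Γ) (hγ : 0 < γ) (h1 : γ ^ p = α * Γ) (h2 : Γ ^ q = β * γ)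
    (hb : b = (p * q - 1) * (2 * p * q + p + q) /
      (4 * p * q * (p + 1) * (q + 1) * (μ + 1)))
    (Φ₀ Ψ₀ : ℝ → ℝ)
    (hΦ₀ : ∀ z, Φ₀ z = Γ * (1 + b * z ^ 2) ^ (-α))
    (hΨ₀ : ∀ z, Ψ₀ z = γ * (1 + b * z ^ 2) ^ (-β)) :
    ∀ z : ℝ, -(z / 2) * deriv Φ₀ z - α * Φ₀ z + Ψ₀ z ^ p = 0 ∧
      -(z / 2) * deriv Ψ₀ z - β * Ψ₀ z + Φ₀ z ^ q = 0 := by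
  have hpq : 0 < p * q - 1 := by nlinarith
  have hb_nonneg : 0 ≤ b := by
    rw [hb]
    have : 0 < 2 * p * q + p + q := by nlinarith
    positivity
  have hβp : β * p = α + 1 := by rw [hα, hβ]; exact div_mul_add_one_eq hpq.ne'
  have hαq : α * q = β + 1 := by
    rw [hα, hβ, mul_comm p q]; exact div_mul_add_one_eq (by linarith [mul_comm p q])
  obtain rfl : Φ₀ = fun z => Γ * (1 + b * z ^ 2) ^ (-α) := funext hΦ₀
  obtain rfl : Ψ₀ = fun z => γ * (1 + b * z ^ 2) ^ (-β) := funext hΨ₀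
  exact fun z => ⟨profile_equation hb_nonneg hγ.le h1 hβp z,
    profile_equation hb_nonneg hΓ.le h2 hαq z⟩
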